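/- arXiv:cs/0702124 — 11 statements merged into one kernel-verified Lean document; each statement's English description precedes it below -/
import Mathlib

section
/- Σ_{v∈V} C(d̂(v),2) + Σ_{{u,v}∈E(H)} d̂(u)·d̂(v) ≤ S·d_max²/2. (In other words, the total number of unsuitable mini-vertex pairs — self-loop pairs plus double-edge pairs — is at most S·d_max²/2.) -/
/-!
Summing a symmetric edge weight over the darts counts every edge twice, so grouping the darts by
their tail gives `2 ∑_{uv ∈ E} d̂ u d̂ v = ∑_v d̂ v ∑_{u ∼ v} d̂ u ≤ d_max ∑_v deg v · d̂ v`.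
Together with `2 C(d̂ v, 2) = d̂ v (d̂ v - 1)`, vertex `v` contributes at most
`d̂ v (d̂ v - 1 + deg v · d_max) ≤ d̂ v · d_max²`, since `d̂ v + deg v ≤ d_max`.
-/

open Finset

namespace SimpleGraph

variable {V M : Type*} [Fintype V] (G : SimpleGraph V) [DecidableRel G.Adj]
  [AddCommMonoid M]

theorem sum_darts_edge (f : Sym2 V → M) :
    ∑ d : G.Dart, f d.edge = 2 • ∑ e ∈ G.edgeFinset, f e := by
  classical
  rw [← sum_fiberwise_of_maps_to' (t := G.edgeFinset) (fun d _ => mem_edgeFinset.2 d.edge_mem),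
    smul_sum]
  refine sum_congr rfl fun e he => ?_
  rw [sum_const, G.dart_edge_fiber_card e (mem_edgeFinset.1 he)]

theorem sum_darts_fst (f : V → M) : ∑ d : G.Dart, f d.fst = ∑ v, G.degree v • f v := by
  classical
  rw [← sum_fiberwise_of_maps_to' (t := univ) (fun d _ => mem_univ d.fst)]
  refine sum_congr rfl fun v _ => ?_
  rw [sum_const]
  rw [← G.dart_fst_fiber_card_eq_degree v]

theorem two_mul_sum_edgeFinset_mul_le {R : Type*} [CommSemiring R] [PartialOrder R]
    [IsOrderedRing R] (f : V → R) {c : R} (hf : ∀ v, 0 ≤ f v) (hfc : ∀ v, f v ≤ c) :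
    2 * ∑ e ∈ G.edgeFinset, Sym2.lift ⟨fun u v => f u * f v, fun _ _ => mul_comm _ _⟩ e
      ≤ c * ∑ v, G.degree v * f v := by
  rw [two_mul, ← two_nsmul, ← sum_darts_edge, mul_sum]
  calc ∑ d : G.Dart, Sym2.lift ⟨fun u v => f u * f v, _⟩ d.edge
      ≤ ∑ d : G.Dart, f d.fst * c :=
        sum_le_sum fun d _ => mul_le_mul_of_nonneg_left (hfc d.snd) (hf d.fst)
    _ = ∑ v, c * (G.degree v * f v) := by
        rw [G.sum_darts_fst fun v => f v * c]
        simp only [nsmul_eq_mul]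
        congr! 1
        ring

end SimpleGraph

theorem cast_choose_two_add_mul_le {d g m : ℕ} (h : d + g ≤ m) :
    (d.choose 2 : ℝ) + g * d * m / 2 ≤ d * m ^ 2 / 2 := by
  rw [Nat.cast_choose_two]
  rcases Nat.eq_zero_or_pos d with rfl | hd
  · simp
  have h' : (d : ℝ) + g ≤ m := by exact_mod_cast h
  have hd' : (1 : ℝ) ≤ d := by exact_mod_cast hd
  have hvertex : (d : ℝ) - 1 + g * m ≤ m ^ 2 := by
    nlinarith [mul_nonneg (by linarith : (0 : ℝ) ≤ m - g) (by linarith : (0 : ℝ) ≤ m - 1)]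
  nlinarith [mul_le_mul_of_nonneg_left hvertex (by positivity : (0 : ℝ) ≤ d)]

/-- For a finite simple graph `H` with residual degrees `dhat` satisfying
`dhat v + deg_H v ≤ dmax`, the number of unsuitable mini-vertex pairs
(self-loop pairs plus double-edge pairs) is at most `S * dmax^2 / 2`,
where `S = ∑ v, dhat v`. -/
theorem stmt0 {V : Type*} [Fintype V]
    (H : SimpleGraph V) [DecidableRel H.Adj]
    (dhat : V → ℕ) (dmax : ℕ)
    (hbound : ∀ v, dhat v + H.degree v ≤ dmax) :
    (∑ v, ((dhat v).choose 2 : ℝ)) +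
      ∑ e ∈ H.edgeFinset,
        Sym2.lift ⟨fun u v => (dhat u : ℝ) * (dhat v : ℝ), by intros; ring⟩ e
      ≤ (∑ v, (dhat v : ℝ)) * (dmax : ℝ) ^ 2 / 2 := by
  have hedges := H.two_mul_sum_edgeFinset_mul_le (fun v => (dhat v : ℝ))
    (fun v => Nat.cast_nonneg _) (c := dmax)
    fun v => by exact_mod_cast (hbound v).trans' le_self_add
  calc _ ≤ ∑ v, ((dhat v).choose 2 : ℝ) + dmax * (∑ v, (H.degree v * dhat v : ℝ)) / 2 := by
        linarith
    _ = ∑ v, (((dhat v).choose 2 : ℝ) + H.degree v * dhat v * dmax / 2) := by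
        rw [sum_add_distrib, mul_sum, sum_div]
        congr! 2
        ring
    _ ≤ ∑ v, (dhat v * dmax ^ 2 / 2 : ℝ) :=
        sum_le_sum fun v _ => cast_choose_two_add_mul_le (hbound v)
    _ = _ := by rw [← sum_div, sum_mul]
end

section
/- E[ Σ_{e={i,j}∈E(G)} 1_{e∉D}·d̂(i)·d̂(j)·d(i)·d(j) ] = p·q²·Σ_{{i,j}∈E(G)} d(i)·d(j)·(d(i)−1)·(d(j)−1), where the expectation is over the random deletion set D and 1_{e∉D} is the indicator that edge e is kept. -/
/-!
Summing over `D ⊆ S` with weight `q ^ #D * p ^ (#S - #D)` is the expectation under independent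
deletion, and by `Finset.prod_add` the event "every edge of `K` kept, every edge of `T` deleted" has
probability `p ^ #K * q ^ #T`. If the edge `e = ij` is kept, `d̂(i)` and `d̂(j)` count deleted edges
among the `d(i) - 1` other edges at `i` and the `d(j) - 1` other edges at `j`; these two sets are
disjoint because `G` is simple. Expanding the product `d̂(i) d̂(j)` gives `(d(i) - 1)(d(j) - 1)`
triples `(e, a, b)` of distinct edges, each contributing `p q²`.
-/

open Finset

section BernoulliSubset

variable {α : Type*} [DecidableEq α] (S : Finset α) (p q : ℝ)

theorem sum_powerset_pow_mul_prod_mul_prod_sdiff (f g : α → ℝ) :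
    ∑ D ∈ S.powerset, q ^ #D * p ^ (#S - #D) * ((∏ x ∈ D, f x) * ∏ x ∈ S \ D, g x) =
      ∏ x ∈ S, (q * f x + p * g x) := by
  rw [prod_add]
  refine sum_congr rfl fun D hD => ?_
  rw [prod_mul_distrib, prod_mul_distrib, prod_const, prod_const,
    card_sdiff_of_subset (mem_powerset.1 hD)]
  ring

theorem sum_powerset_pow_mul_boole_disjoint_subset (hpq : p + q = 1) {K T : Finset α}
    (hK : K ⊆ S) (hT : T ⊆ S) (hKT : Disjoint K T) :
    ∑ D ∈ S.powerset, q ^ #D * p ^ (#S - #D) * (if Disjoint K D ∧ T ⊆ D then 1 else 0) =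
      p ^ #K * q ^ #T := by
  have hprod : ∀ D ∈ S.powerset,
      (if Disjoint K D ∧ T ⊆ D then (1 : ℝ) else 0) =
        (∏ x ∈ D, if x ∉ K then 1 else 0) * ∏ x ∈ S \ D, if x ∉ T then 1 else 0 := by
    intro D hD
    rw [prod_boole, prod_boole, ite_zero_mul_ite_zero, one_mul]
    refine if_congr (and_congr disjoint_right ?_) rfl rfl
    simp only [mem_sdiff, and_imp, not_imp_not]
    exact ⟨fun h x _ hx => h hx, fun h x hx => h x (hT hx) hx⟩
  rw [sum_congr rfl fun D hD => by rw [hprod D hD], sum_powerset_pow_mul_prod_mul_prod_sdiff,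
    ← prod_subset (union_subset hK hT) fun x _ hx => ?_, prod_union hKT]
  · rw [← prod_const, ← prod_const]
    congr 1
    · refine prod_congr rfl fun x hx => ?_
      simp [hx, disjoint_left.1 hKT hx]
    · refine prod_congr rfl fun x hx => ?_
      simp [hx, disjoint_right.1 hKT hx]
  · rw [mem_union, not_or] at hx
    simp [hx.1, hx.2, add_comm q, hpq]

end BernoulliSubset

namespace SimpleGraph

variable {V : Type*} [Fintype V] [DecidableEq V] (G : SimpleGraph V) [DecidableRel G.Adj]

theorem filter_mem_eq_filter_erase_incidenceFinset {D : Finset (Sym2 V)} {e : Sym2 V}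
    (hD : D ⊆ G.edgeFinset) (he : e ∉ D) (v : V) :
    D.filter (v ∈ ·) = ((G.incidenceFinset v).erase e).filter (· ∈ D) := by
  ext e'
  simp only [mem_filter, mem_erase, incidenceFinset_eq_filter]
  constructor
  · rintro ⟨h, hv⟩
    exact ⟨⟨fun h' => he (h' ▸ h), hD h, hv⟩, h⟩
  · rintro ⟨⟨-, -, hv⟩, h⟩
    exact ⟨h, hv⟩

theorem sum_powerset_pow_mul_ite_mem_mul_card_filter_mem (p q : ℝ) (hpq : p + q = 1) {i j : V}
    (hadj : G.Adj i j) :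
    ∑ D ∈ G.edgeFinset.powerset, q ^ #D * p ^ (#G.edgeFinset - #D) *
      ((if s(i, j) ∈ D then 0 else 1) *
        ((#(D.filter (i ∈ ·)) : ℝ) * (#(D.filter (j ∈ ·)) : ℝ))) =
      p * q ^ 2 * (((G.degree i : ℝ) - 1) * ((G.degree j : ℝ) - 1)) := by
  set e := s(i, j)
  set A := (G.incidenceFinset i).erase e
  set B := (G.incidenceFinset j).erase e
  have he : e ∈ G.edgeFinset := G.mem_edgeFinset.2 hadj
  have hA : A ⊆ G.edgeFinset := (erase_subset _ _).trans (G.incidenceFinset_subset i)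
  have hB : B ⊆ G.edgeFinset := (erase_subset _ _).trans (G.incidenceFinset_subset j)
  have hsplit : ∀ D ∈ G.edgeFinset.powerset,
      (if e ∈ D then 0 else 1) * ((#(D.filter (i ∈ ·)) : ℝ) * (#(D.filter (j ∈ ·)) : ℝ)) =
        ∑ a ∈ A, ∑ b ∈ B, if Disjoint {e} D ∧ {a, b} ⊆ D then 1 else 0 := by
    intro D hD
    by_cases heD : e ∈ D
    · simp [heD]
    · rw [G.filter_mem_eq_filter_erase_incidenceFinset (mem_powerset.1 hD) heD,
        G.filter_mem_eq_filter_erase_incidenceFinset (mem_powerset.1 hD) heD]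
      simp only [heD, if_false, one_mul, natCast_card_filter, sum_mul_sum, ite_zero_mul_ite_zero,
        disjoint_singleton_left, not_false_eq_true, true_and, insert_subset_iff,
        singleton_subset_iff]
      rfl
  have hterm : ∀ a ∈ A, ∀ b ∈ B,
      ∑ D ∈ G.edgeFinset.powerset, q ^ #D * p ^ (#G.edgeFinset - #D) *
        (if Disjoint {e} D ∧ {a, b} ⊆ D then 1 else 0) = p * q ^ 2 := by
    intro a ha b hb
    obtain ⟨hae, -, hia⟩ : a ≠ e ∧ a ∈ G.edgeFinset ∧ i ∈ a := by
      simpa [A, incidenceFinset_eq_filter] using ha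
    obtain ⟨hbe, -, hjb⟩ : b ≠ e ∧ b ∈ G.edgeFinset ∧ j ∈ b := by
      simpa [B, incidenceFinset_eq_filter] using hb
    have hab : a ≠ b := by
      rintro rfl
      exact hae ((Sym2.mem_and_mem_iff hadj.ne).1 ⟨hia, hjb⟩)
    rw [sum_powerset_pow_mul_boole_disjoint_subset _ p q hpq (singleton_subset_iff.2 he)
      (insert_subset (hA ha) (singleton_subset_iff.2 (hB hb))), card_singleton, card_pair hab,
      pow_one]
    simp [hae.symm, hbe.symm]
  rw [sum_congr rfl fun D hD => by rw [hsplit D hD]]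
  simp_rw [mul_sum]
  rw [sum_comm, sum_congr rfl fun a ha => sum_comm.trans (sum_congr rfl (hterm a ha))]
  simp only [sum_const, nsmul_eq_mul]
  have hei : e ∈ G.incidenceFinset i :=
    (G.mem_incidenceFinset i e).2 (G.mk'_mem_incidenceSet_left_iff.2 hadj)
  have hej : e ∈ G.incidenceFinset j :=
    (G.mem_incidenceFinset j e).2 (G.mk'_mem_incidenceSet_right_iff.2 hadj)
  rw [cast_card_erase_of_mem hei, cast_card_erase_of_mem hej, card_incidenceFinset_eq_degree,
    card_incidenceFinset_eq_degree]
  ring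

end SimpleGraph

/-- Each edge of `G` is deleted independently with probability `q` (kept with
probability `p`), giving the random deletion set `D ⊆ E(G)`; `d̂(v)` counts
deleted edges incident to `v`.  Then
`E[ ∑_{e={i,j}∈E(G)} 1_{e∉D}·d̂(i)·d̂(j)·d(i)·d(j) ]
  = p·q²·∑_{{i,j}∈E(G)} d(i)·d(j)·(d(i)−1)·(d(j)−1)`. -/
theorem stmt5 {V : Type*} [Fintype V] [DecidableEq V]
    (G : SimpleGraph V) [DecidableRel G.Adj]
    (p q : ℝ) (hpq : p + q = 1) :
    ∑ D ∈ G.edgeFinset.powerset,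
        q ^ D.card * p ^ (G.edgeFinset.card - D.card) *
          ∑ e ∈ G.edgeFinset,
            (if e ∈ D then (0 : ℝ) else 1) *
              Sym2.lift ⟨fun i j =>
                ((D.filter (fun e' => i ∈ e')).card : ℝ) *
                  ((D.filter (fun e' => j ∈ e')).card : ℝ) *
                  ((G.degree i : ℝ) * (G.degree j : ℝ)), by intros; ring⟩ e
      = p * q ^ 2 *
          ∑ e ∈ G.edgeFinset,
            Sym2.lift ⟨fun i j =>
              (G.degree i : ℝ) * (G.degree j : ℝ) *
                (((G.degree i : ℝ) - 1) * ((G.degree j : ℝ) - 1)),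
              by intros; ring⟩ e := by
  simp_rw [mul_sum]
  rw [sum_comm]
  refine sum_congr rfl fun e he => ?_
  induction e using Sym2.ind with
  | _ i j =>
    simp only [Sym2.lift_mk]
    calc _ = (∑ D ∈ G.edgeFinset.powerset, q ^ #D * p ^ (#G.edgeFinset - #D) *
          ((if s(i, j) ∈ D then 0 else 1) *
            ((#(D.filter (i ∈ ·)) : ℝ) * (#(D.filter (j ∈ ·)) : ℝ)))) *
          ((G.degree i : ℝ) * G.degree j) := by
          rw [sum_mul]
          exact sum_congr rfl fun _ _ => by ring
      _ = _ := by
          rw [G.sum_powerset_pow_mul_ite_mem_mul_card_filter_mem p q hpq (G.mem_edgeFinset.1 he)]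
          ring
end

section
/- For every integer r with 0 ≤ r < m, one has ψ_r(G) ≤ d_max²·(2m−2r)²/m. -/
/-!
Every ingredient of `ψ_r` is a sum over vertices or edges that is controlled by the maximum
degree `Δ`: by the handshake lemma the vertex sums are at most `2m` times a power of `Δ`, the
first edge sum is at most `m Δ²`, and the second edge sum is nonnegative and enters with a
minus sign. Substituting these bounds, with `0 ≤ r ≤ m - 1` and `2m - 2r ≥ 2`, leaves
`(1/4 + 1/4 + 1/8 + 1/16) Δ² (2m - 2r)² / m`.
-/

open Finset

lemma psi_le_of_bounds {M D R S₁ S₂ S₃ S₄ S₅ : ℝ} (hR : 0 ≤ R) (hRM : R + 1 ≤ M)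
    (h₁ : S₁ ≤ M * D ^ 2) (h₂ : S₂ ≤ M * D ^ 2) (h₃₀ : 0 ≤ S₃) (h₃ : S₃ ≤ 2 * M * D)
    (h₄ : 0 ≤ S₄) (h₅ : S₅ ≤ 2 * M * D ^ 2) :
    (2 * M - 2 * R) ^ 2 *
        (S₁ / (4 * M ^ 2) + R * S₂ / (4 * M ^ 3) + S₃ ^ 2 / (32 * M ^ 3)
          - R * S₄ / (16 * M ^ 4)) +
      (2 * M - 2 * R) * S₅ / (16 * M ^ 2) ≤ D ^ 2 * (2 * M - 2 * R) ^ 2 / M := by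
  set s := 2 * M - 2 * R
  have hM : 0 < M := by linarith
  have hs : 2 ≤ s := by linarith
  have t₁ : S₁ / (4 * M ^ 2) ≤ D ^ 2 / M / 4 := by
    rw [div_le_iff₀ (by positivity)]
    calc S₁ ≤ M * D ^ 2 := h₁
      _ = D ^ 2 / M / 4 * (4 * M ^ 2) := by field_simp
  have t₂ : R * S₂ / (4 * M ^ 3) ≤ D ^ 2 / M / 4 := by
    rw [div_le_iff₀ (by positivity)]
    calc R * S₂ ≤ R * (M * D ^ 2) := by gcongr
      _ ≤ M * (M * D ^ 2) := by gcongr; linarith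
      _ = D ^ 2 / M / 4 * (4 * M ^ 3) := by field_simp
  have t₃ : S₃ ^ 2 / (32 * M ^ 3) ≤ D ^ 2 / M / 8 := by
    rw [div_le_iff₀ (by positivity)]
    calc S₃ ^ 2 ≤ (2 * M * D) ^ 2 := by gcongr
      _ = D ^ 2 / M / 8 * (32 * M ^ 3) := by field_simp; ring
  have t₄ : 0 ≤ R * S₄ / (16 * M ^ 4) := by positivity
  have t₅ : s * S₅ / (16 * M ^ 2) ≤ s ^ 2 * (D ^ 2 / M / 16) := by
    rw [div_le_iff₀ (by positivity)]
    calc s * S₅ ≤ s * (2 * M * D ^ 2) := by gcongr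
      _ ≤ s * (s * M * D ^ 2) := by gcongr
      _ = s ^ 2 * (D ^ 2 / M / 16) * (16 * M ^ 2) := by field_simp
  have slack : 0 ≤ s ^ 2 * (D ^ 2 / M) := by positivity
  linear_combination s ^ 2 * t₁ + s ^ 2 * t₂ + s ^ 2 * t₃ + s ^ 2 * t₄ + t₅ + 5 / 16 * slack

namespace SimpleGraph

variable {V : Type*} [Fintype V] (G : SimpleGraph V) [DecidableRel G.Adj]

lemma sum_le_two_mul_card_edgeFinset_mul {f : V → ℝ} {c : ℝ}
    (hf : ∀ v, f v ≤ G.degree v * c) : ∑ v, f v ≤ 2 * #G.edgeFinset * c := by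
  have handshake : ∑ v, (G.degree v : ℝ) = 2 * #G.edgeFinset :=
    mod_cast G.sum_degrees_eq_twice_card_edges
  calc ∑ v, f v ≤ ∑ v, G.degree v * c := sum_le_sum fun v _ => hf v
    _ = 2 * #G.edgeFinset * c := by rw [← sum_mul, handshake]

lemma forall_mem_edgeFinset_lift {β : Type*} {p : β → Prop} {f : V → V → β}
    (hf : ∀ i j, f i j = f j i) (h : ∀ i j, G.Adj i j → p (f i j)) :
    ∀ e ∈ G.edgeFinset, p (Sym2.lift ⟨f, hf⟩ e) := by
  intro e he
  induction e using Sym2.ind with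
  | _ i j => exact h i j (G.mem_edgeFinset.1 he)

lemma sum_edgeFinset_lift_le {f : V → V → ℝ} (hf : ∀ i j, f i j = f j i) {c : ℝ}
    (h : ∀ i j, G.Adj i j → f i j ≤ c) :
    ∑ e ∈ G.edgeFinset, Sym2.lift ⟨f, hf⟩ e ≤ #G.edgeFinset * c :=
  (sum_le_card_nsmul _ _ _ (G.forall_mem_edgeFinset_lift (p := (· ≤ c)) hf h)).trans_eq
    (nsmul_eq_mul _ _)

lemma sum_edgeFinset_lift_nonneg {f : V → V → ℝ} (hf : ∀ i j, f i j = f j i)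
    (h : ∀ i j, G.Adj i j → 0 ≤ f i j) : 0 ≤ ∑ e ∈ G.edgeFinset, Sym2.lift ⟨f, hf⟩ e :=
  sum_nonneg (G.forall_mem_edgeFinset_lift (p := (0 ≤ ·)) hf h)

variable {G} {k : ℕ}

lemma sum_degree_pow_succ_le (hdeg : ∀ v, G.degree v ≤ k) (n : ℕ) :
    ∑ v, (G.degree v : ℝ) ^ (n + 1) ≤ 2 * #G.edgeFinset * (k : ℝ) ^ n := by
  refine G.sum_le_two_mul_card_edgeFinset_mul fun v => ?_
  rw [pow_succ']
  gcongr
  exact hdeg v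

lemma sum_choose_two_degree_le (hdeg : ∀ v, G.degree v ≤ k) :
    ∑ v, ((G.degree v).choose 2 : ℝ) ≤ #G.edgeFinset * k := by
  refine (G.sum_le_two_mul_card_edgeFinset_mul (c := (k : ℝ) / 2) fun v => ?_).trans_eq (by ring)
  have hdeg' : (G.degree v : ℝ) ≤ k := mod_cast hdeg v
  rw [Nat.cast_choose_two]
  nlinarith [(G.degree v).cast_nonneg (α := ℝ)]

end SimpleGraph

/-- For a graph `G` with `m ≥ 1` edges, maximum degree at most `dmax ≥ 1`, and
`0 ≤ r < m`, the expected weighted number of unsuitable pairs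
`ψ_r(G)` satisfies `ψ_r(G) ≤ dmax²·(2m−2r)²/m`. -/
theorem stmt6 {V : Type*} [Fintype V]
    (G : SimpleGraph V) [DecidableRel G.Adj]
    (m : ℕ) (hm : G.edgeFinset.card = m)
    (dmax : ℕ) (hdeg : ∀ v, G.degree v ≤ dmax)
    (r : ℕ) (hr : r < m) :
    ((2 * m : ℝ) - 2 * r) ^ 2 *
        ((∑ v, ((G.degree v).choose 2 : ℝ)) / (4 * (m : ℝ) ^ 2) +
          (r : ℝ) *
            (∑ e ∈ G.edgeFinset,
              Sym2.lift ⟨fun i j => ((G.degree i : ℝ) - 1) * ((G.degree j : ℝ) - 1),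
                by intros; ring⟩ e) / (4 * (m : ℝ) ^ 3) +
          (∑ v, (G.degree v : ℝ) ^ 2) ^ 2 / (32 * (m : ℝ) ^ 3) -
          (r : ℝ) *
            (∑ e ∈ G.edgeFinset,
              Sym2.lift ⟨fun i j =>
                (G.degree i : ℝ) * (G.degree j : ℝ) *
                  (((G.degree i : ℝ) - 1) * ((G.degree j : ℝ) - 1)),
                by intros; ring⟩ e) / (16 * (m : ℝ) ^ 4)) +
      ((2 * m : ℝ) - 2 * r) * (∑ v, (G.degree v : ℝ) ^ 3) / (16 * (m : ℝ) ^ 2)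
      ≤ (dmax : ℝ) ^ 2 * ((2 * m : ℝ) - 2 * r) ^ 2 / m := by
  subst hm
  have hdeg' (v : V) : (G.degree v : ℝ) ≤ dmax := mod_cast hdeg v
  have hpos {i j : V} (h : G.Adj i j) : (1 : ℝ) ≤ G.degree i := mod_cast h.degree_pos_left
  refine psi_le_of_bounds (Nat.cast_nonneg r) (mod_cast hr) ?_ ?_ ?_ ?_ ?_ ?_
  · refine (SimpleGraph.sum_choose_two_degree_le hdeg).trans ?_
    gcongr
    exact_mod_cast Nat.le_self_pow two_ne_zero dmax
  · refine G.sum_edgeFinset_lift_le _ fun i j hij => ?_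
    nlinarith [hpos hij, hpos hij.symm, hdeg' i, hdeg' j]
  · positivity
  · simpa using SimpleGraph.sum_degree_pow_succ_le hdeg 1
  · refine G.sum_edgeFinset_lift_nonneg _ fun i j hij => ?_
    have := hpos hij
    have := hpos hij.symm
    positivity
  · exact SimpleGraph.sum_degree_pow_succ_le hdeg 2
end

section
/- Suppose that every pair of distinct vertices u ≠ v with d̂(u) > 0 and d̂(v) > 0 is adjacent in H (this is exactly the condition under which the sequential algorithm fails with S residual mini-vertices remaining). Then the number of vertices v with d̂(v) > 0 is at most d_max, and S ≤ d_max² + 1. -/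
/-!
The vertices of positive residual degree form a clique `K` of `H`, so each of them has
`deg_H v ≥ |K| - 1`, and the degree bound leaves `d̂(v) ≤ d_max + 1 - |K|` for it. Since
`d̂(v) ≥ 1` this gives `|K| ≤ d_max`, and summing over `K` gives
`S ≤ |K| (d_max + 1 - |K|) ≤ d_max²`.
-/

open Finset

namespace SimpleGraph

variable {V : Type*} [Fintype V] {H : SimpleGraph V} [DecidableRel H.Adj]
  {s : Finset V} {f : V → ℕ} {d : ℕ}

theorem IsClique.card_sub_one_le_degree (hs : H.IsClique (s : Set V)) {v : V} (hv : v ∈ s) :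
    #s - 1 ≤ H.degree v := by
  classical
  have hsub : s.erase v ⊆ H.neighborFinset v := fun u hu => by
    rw [mem_erase] at hu
    rw [mem_neighborFinset]
    exact hs hv hu.2 (Ne.symm hu.1)
  calc #s - 1 = #(s.erase v) := (card_erase_of_mem hv).symm
    _ ≤ #(H.neighborFinset v) := card_le_card hsub
    _ = H.degree v := H.card_neighborFinset_eq_degree v

theorem IsClique.add_card_le (hs : H.IsClique (s : Set V)) {v : V} (hv : v ∈ s)
    (hbound : f v + H.degree v ≤ d) : f v + #s ≤ d + 1 := by
  have := hs.card_sub_one_le_degree hv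
  have : 0 < #s := card_pos.2 ⟨v, hv⟩
  omega

theorem IsClique.card_le (hs : H.IsClique (s : Set V)) (hpos : ∀ v ∈ s, 0 < f v)
    (hbound : ∀ v ∈ s, f v + H.degree v ≤ d) : #s ≤ d := by
  obtain rfl | ⟨v, hv⟩ := s.eq_empty_or_nonempty
  · simp
  · have := hs.add_card_le hv (hbound v hv)
    have := hpos v hv
    omega

theorem IsClique.sum_le_sq (hs : H.IsClique (s : Set V)) (hpos : ∀ v ∈ s, 0 < f v)
    (hbound : ∀ v ∈ s, f v + H.degree v ≤ d) : ∑ v ∈ s, f v ≤ d ^ 2 := by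
  have hcard := hs.card_le hpos hbound
  obtain rfl | hne := s.eq_empty_or_nonempty
  · simp
  calc ∑ v ∈ s, f v ≤ #s * (d + 1 - #s) :=
        sum_le_card_nsmul s f _ fun v hv => by have := hs.add_card_le hv (hbound v hv); omega
    _ ≤ d * d := Nat.mul_le_mul hcard (by have := hne.card_pos; omega)
    _ = d ^ 2 := (sq d).symm

end SimpleGraph

theorem stmt7_general {V : Type*} [Fintype V]
    (H : SimpleGraph V) [DecidableRel H.Adj]
    (dhat : V → ℕ) (dmax : ℕ)
    (hbound : ∀ v, dhat v + H.degree v ≤ dmax)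
    (hfail : ∀ u v, u ≠ v → 0 < dhat u → 0 < dhat v → H.Adj u v) :
    (Finset.univ.filter fun v => 0 < dhat v).card ≤ dmax ∧
      ∑ v, dhat v ≤ dmax ^ 2 + 1 := by
  set K := univ.filter fun v => 0 < dhat v
  have hclique : H.IsClique (K : Set V) := fun u hu v hv huv =>
    hfail u v huv (mem_filter.1 hu).2 (mem_filter.1 hv).2
  have hpos : ∀ v ∈ K, 0 < dhat v := fun v hv => (mem_filter.1 hv).2
  have hsum : ∑ v, dhat v = ∑ v ∈ K, dhat v :=
    (sum_filter_of_ne fun v _ h => Nat.pos_of_ne_zero h).symm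
  refine ⟨hclique.card_le hpos fun v _ => hbound v, ?_⟩
  rw [hsum]
  exact (hclique.sum_le_sq hpos fun v _ => hbound v).trans (Nat.le_succ _)

/-- If every pair of distinct vertices with positive residual degree is
adjacent in `H` (the failure condition of the sequential algorithm), then the
number of vertices with positive residual degree is at most `dmax`, and the
number `S` of remaining mini-vertices satisfies `S ≤ dmax² + 1`. -/
theorem stmt7 {V : Type*} [Fintype V] [DecidableEq V]
    (H : SimpleGraph V) [DecidableRel H.Adj]
    (dhat : V → ℕ) (dmax : ℕ) (hdmax : 0 < dmax)
    (hbound : ∀ v, dhat v + H.degree v ≤ dmax)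
    (hfail : ∀ u v, u ≠ v → 0 < dhat u → 0 < dhat v → H.Adj u v) :
    (Finset.univ.filter fun v => 0 < dhat v).card ≤ dmax ∧
      ∑ v, dhat v ≤ dmax ^ 2 + 1 :=
  stmt7_general H dhat dmax hbound hfail
end

section
/- For all integers m ≥ 1 and 0 ≤ r ≤ m, C(m,r)·(r/m)^r·((m−r)/m)^{m−r} ≥ 1/√(2m), with the convention 0⁰ = 1. (Equivalently: a Binomial(m, r/m) random variable takes the value r with probability at least 1/√(2m).) -/
/-!
With Stirling's sequence `s n = n! / (√(2n) (n/e)^n)`, the binomial term for `r + k = m`,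
`r, k ≠ 0`, equals `s m · m / (s r · s k · √(r k)) / √(2m)`, so it suffices that
`s r · s k · √(r k) ≤ s (r + k) · (r + k)`. The sequence decreases from `s 1 = e/√2` and
`s 2 = e²/4` towards `√π`, and `√(r k) ≤ (r + k)/2`; this settles `r, k ≥ 2`. For `r = 1` the
AM-GM bound is too weak and `√k ≤ √2 (1 + k)/3` is used instead, and `r = k = 1` is an equality.
-/

open Real Stirling
open scoped Nat

namespace Stirling

lemma factorial_eq_stirlingSeq_mul {n : ℕ} (hn : n ≠ 0) :
    (n ! : ℝ) = stirlingSeq n * (√(2 * n) * (n / exp 1) ^ n) := by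
  rw [stirlingSeq, div_mul_cancel₀]
  positivity

lemma stirlingSeq_pos {n : ℕ} (hn : n ≠ 0) : 0 < stirlingSeq n :=
  (sqrt_pos.2 pi_pos).trans_le (sqrt_pi_le_stirlingSeq hn)

lemma stirlingSeq_two : stirlingSeq 2 = exp 1 ^ 2 / 4 := by
  have : √(2 * 2 : ℝ) = 2 := by rw [show (2 * 2 : ℝ) = 2 ^ 2 by norm_num, sqrt_sq zero_le_two]
  rw [stirlingSeq]
  push_cast
  rw [this]
  field_simp
  norm_num

lemma stirlingSeq_le_of_two_le {n : ℕ} (hn : 2 ≤ n) : stirlingSeq n ≤ exp 1 ^ 2 / 4 := by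
  obtain ⟨k, rfl⟩ := Nat.exists_eq_add_of_le' hn
  rw [← stirlingSeq_two]
  exact stirlingSeq'_antitone (show 1 ≤ k + 1 by omega)

lemma seven_div_four_le_sqrt_pi : (7 / 4 : ℝ) ≤ √π := by
  rw [Real.le_sqrt (by norm_num) pi_pos.le]
  linarith [pi_gt_d2]

lemma stirlingSeq_mul_stirlingSeq_mul_sqrt_le_of_two_le {r k : ℕ} (hr : 2 ≤ r) (hk : 2 ≤ k) :
    stirlingSeq r * stirlingSeq k * √(r * k) ≤ stirlingSeq (r + k) * (r + k) := by
  have hamgm : √(r * k : ℝ) ≤ (r + k) / 2 := by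
    rw [sqrt_le_left (by positivity)]
    nlinarith [sq_nonneg ((r : ℝ) - k)]
  have he : exp 1 ^ 4 ≤ 56 := by
    nlinarith [pow_le_pow_left₀ (exp_pos 1).le exp_one_lt_d9.le 4]
  calc stirlingSeq r * stirlingSeq k * √(r * k)
      ≤ exp 1 ^ 2 / 4 * (exp 1 ^ 2 / 4) * ((r + k) / 2) := by
        gcongr
        · exact (stirlingSeq_pos (by omega)).le
        · exact stirlingSeq_le_of_two_le hr
        · exact stirlingSeq_le_of_two_le hk
    _ ≤ √π * (r + k) := by nlinarith [seven_div_four_le_sqrt_pi]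
    _ ≤ stirlingSeq (r + k) * (r + k) := by
        gcongr
        exact sqrt_pi_le_stirlingSeq (by omega)

lemma stirlingSeq_one_mul_stirlingSeq_mul_sqrt_le {k : ℕ} (hk : 2 ≤ k) :
    stirlingSeq 1 * stirlingSeq k * √(1 * k) ≤ stirlingSeq (1 + k) * (1 + k) := by
  have hk' : (2 : ℝ) ≤ k := by exact_mod_cast hk
  have hsqrt : √(k / 2 : ℝ) ≤ (1 + k) / 3 := by
    rw [sqrt_le_left (by positivity)]
    nlinarith
  have he : exp 1 ^ 3 ≤ 21 := by
    nlinarith [pow_le_pow_left₀ (exp_pos 1).le exp_one_lt_d9.le 3]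
  calc stirlingSeq 1 * stirlingSeq k * √(1 * k)
      = exp 1 * √(k / 2) * stirlingSeq k := by
        rw [stirlingSeq_one, one_mul, sqrt_div' _ zero_le_two]
        ring
    _ ≤ exp 1 * ((1 + k) / 3) * (exp 1 ^ 2 / 4) := by
        gcongr
        · exact (stirlingSeq_pos (by omega)).le
        · exact stirlingSeq_le_of_two_le hk
    _ ≤ √π * (1 + k) := by nlinarith [seven_div_four_le_sqrt_pi]
    _ ≤ stirlingSeq (1 + k) * (1 + k) := by
        gcongr
        exact sqrt_pi_le_stirlingSeq (by omega)

theorem stirlingSeq_mul_stirlingSeq_mul_sqrt_le {r k : ℕ} (hr : r ≠ 0) (hk : k ≠ 0) :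
    stirlingSeq r * stirlingSeq k * √(r * k) ≤ stirlingSeq (r + k) * (r + k) := by
  wlog hrk : r ≤ k generalizing r k
  · have := this hk hr (by omega)
    rwa [mul_comm (stirlingSeq k), mul_comm (k : ℝ), add_comm k, add_comm (k : ℝ)] at this
  obtain rfl | hr2 : r = 1 ∨ 2 ≤ r := by omega
  · obtain rfl | hk2 : k = 1 ∨ 2 ≤ k := by omega
    · rw [stirlingSeq_one, stirlingSeq_two]
      field_simp
      norm_num
    · exact_mod_cast stirlingSeq_one_mul_stirlingSeq_mul_sqrt_le hk2
  · exact stirlingSeq_mul_stirlingSeq_mul_sqrt_le_of_two_le hr2 (hr2.trans hrk)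

theorem cast_choose_mul_pow_mul_pow_eq {r k : ℕ} (hr : r ≠ 0) (hk : k ≠ 0) :
    ((r + k).choose r : ℝ) * (r / (r + k : ℝ)) ^ r * (k / (r + k : ℝ)) ^ k =
      stirlingSeq (r + k) * (r + k) / (stirlingSeq r * stirlingSeq k * √(r * k)) /
        √(2 * (r + k)) := by
  have hsr := stirlingSeq_pos hr
  have hsk := stirlingSeq_pos hk
  have hrk : √(2 * r : ℝ) * √(2 * k) = 2 * √(r * k) := by
    rw [← sqrt_mul (by positivity), show (2 * r * (2 * k) : ℝ) = 2 ^ 2 * (r * k) by ring,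
      sqrt_mul (by positivity), sqrt_sq zero_le_two]
  have hm : √(2 * (r + k) : ℝ) * √(2 * (r + k)) = 2 * (r + k) := mul_self_sqrt (by positivity)
  have hpow : (((r + k : ℕ) : ℝ) / exp 1) ^ (r + k) * (r / (r + k : ℝ)) ^ r *
      (k / (r + k : ℝ)) ^ k = (r / exp 1) ^ r * (k / exp 1) ^ k := by
    have : (r + k : ℝ) ≠ 0 := by positivity
    push_cast
    rw [pow_add, show ∀ a b c d : ℝ, a * b * c * d = (a * c) * (b * d) by intros; ring,
      ← mul_pow, ← mul_pow]
    congr 2 <;> field_simp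
  rw [Nat.cast_choose ℝ (Nat.le_add_right r k), Nat.add_sub_cancel_left,
    factorial_eq_stirlingSeq_mul hr, factorial_eq_stirlingSeq_mul hk,
    factorial_eq_stirlingSeq_mul (by omega)]
  field_simp
  push_cast at hpow ⊢
  linear_combination (stirlingSeq (r + k) * √(r * k) * √(2 * (r + k)) * √(2 * (r + k))) * hpow
    + (stirlingSeq (r + k) * √(r * k) * ((r / exp 1) ^ r * (k / exp 1) ^ k)) * hm
    - (stirlingSeq (r + k) * ((r / exp 1) ^ r * (k / exp 1) ^ k) * (r + k)) * hrk

end Stirling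

/-- For all `m ≥ 1` and `0 ≤ r ≤ m`, a `Binomial(m, r/m)` random variable
takes the value `r` with probability at least `1/√(2m)`:
`C(m,r)·(r/m)^r·((m−r)/m)^{m−r} ≥ 1/√(2m)` (with the convention `0⁰ = 1`,
which holds for natural-number exponents in `ℝ`). -/
theorem stmt8 (m r : ℕ) (hm : 1 ≤ m) (hr : r ≤ m) :
    1 / Real.sqrt (2 * m) ≤
      (m.choose r : ℝ) * ((r : ℝ) / m) ^ r * (((m - r : ℕ) : ℝ) / m) ^ (m - r) := by
  have hm' : (m : ℝ) ≠ 0 := by positivity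
  have hsqrt : 1 / √(2 * m) ≤ 1 := by
    rw [div_le_one (by positivity), one_le_sqrt]
    norm_cast
    omega
  obtain rfl | hr0 := Nat.eq_zero_or_pos r
  · simpa [hm'] using hsqrt
  obtain rfl | hrm := hr.eq_or_lt
  · simpa [hm'] using hsqrt
  obtain ⟨k, rfl⟩ := Nat.exists_eq_add_of_le hr
  have hk : k ≠ 0 := by omega
  rw [Nat.add_sub_cancel_left]
  push_cast
  rw [cast_choose_mul_pow_mul_pow_eq hr0.ne' hk]
  gcongr
  have hpos : 0 < stirlingSeq r * stirlingSeq k * √(r * k) := by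
    have := stirlingSeq_pos hr0.ne'
    have := stirlingSeq_pos hk
    positivity
  rw [one_le_div hpos]
  exact stirlingSeq_mul_stirlingSeq_mul_sqrt_le hr0.ne' hk
end

section
/- Let f(m,s) = C(m,s)·(s/m)^s·((m−s)/m)^{m−s}. For all integers m and r with 1 ≤ r and 2r + 1 ≤ m, one has f(m, r+1) ≤ f(m, r); that is, the probability that a Binomial(m, s/m) variable equals s is non-increasing in s for s up to (m−1)/2. -/
/-!
Clearing the common denominator `m ^ m`, and using
`C(m, r+1) (r+1) = C(m, r) (m-r)`, the inequality becomes
`(r+1)^r (m-r-1)^(m-r-1) ≤ r^r (m-r)^(m-r-1)`, i.e.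
`(1 + 1/r)^r ≤ (1 + 1/b)^b` with `b = m-r-1 ≥ r`. This is the monotonicity of
`(1 + 1/x)^x`, which follows from Bernoulli's inequality.
-/

open Real

theorem monotoneOn_one_add_inv_rpow_self :
    MonotoneOn (fun x : ℝ => (1 + x⁻¹) ^ x) (Set.Ioi 0) := by
  intro x (hx : 0 < x) y (hy : 0 < y) hxy
  have hbernoulli : 1 + x⁻¹ ≤ (1 + y⁻¹) ^ (y / x) := by
    calc 1 + x⁻¹ = 1 + y / x * y⁻¹ := by field_simp
      _ ≤ (1 + y⁻¹) ^ (y / x) :=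
        one_add_mul_self_le_rpow_one_add (by linarith [inv_pos.2 hy])
          ((one_le_div hx).2 hxy)
  calc (1 + x⁻¹) ^ x ≤ ((1 + y⁻¹) ^ (y / x)) ^ x :=
        rpow_le_rpow (by positivity) hbernoulli hx.le
    _ = (1 + y⁻¹) ^ y := by rw [← rpow_mul (by positivity), div_mul_cancel₀ _ hx.ne']

theorem succ_pow_self_mul_pow_self_le {a b : ℕ} (ha : 1 ≤ a) (hab : a ≤ b) :
    (a + 1) ^ a * b ^ b ≤ a ^ a * (b + 1) ^ b := by
  have ha' : (0 : ℝ) < a := by exact_mod_cast ha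
  have hb' : (0 : ℝ) < b := ha'.trans_le (by exact_mod_cast hab)
  have hmono := monotoneOn_one_add_inv_rpow_self ha' hb' (by exact_mod_cast hab)
  simp only [rpow_natCast] at hmono
  have hsucc : ∀ n : ℕ, (0 : ℝ) < n → ((n : ℝ) + 1) ^ n = (1 + (n : ℝ)⁻¹) ^ n * (n : ℝ) ^ n :=
    fun n hn => by rw [← mul_pow, add_mul, inv_mul_cancel₀ hn.ne', one_mul, add_comm]
  suffices h : ((a : ℝ) + 1) ^ a * (b : ℝ) ^ b ≤ (a : ℝ) ^ a * ((b : ℝ) + 1) ^ b by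
    exact_mod_cast h
  rw [hsucc a ha', hsucc b hb']
  calc (1 + (a : ℝ)⁻¹) ^ a * (a : ℝ) ^ a * (b : ℝ) ^ b
      = (1 + (a : ℝ)⁻¹) ^ a * ((a : ℝ) ^ a * (b : ℝ) ^ b) := by ring
    _ ≤ (1 + (b : ℝ)⁻¹) ^ b * ((a : ℝ) ^ a * (b : ℝ) ^ b) := by gcongr
    _ = (a : ℝ) ^ a * ((1 + (b : ℝ)⁻¹) ^ b * (b : ℝ) ^ b) := by ring

theorem choose_succ_mul_pow_le {m r : ℕ} (hr : 1 ≤ r) (hm : 2 * r + 1 ≤ m) :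
    m.choose (r + 1) * (r + 1) ^ (r + 1) * (m - (r + 1)) ^ (m - (r + 1))
      ≤ m.choose r * r ^ r * (m - r) ^ (m - r) := by
  obtain ⟨b, rfl⟩ : ∃ b, m = r + 1 + b := ⟨m - (r + 1), by omega⟩
  have hsub : r + 1 + b - r = b + 1 := by omega
  rw [Nat.add_sub_cancel_left, hsub]
  have hchoose := Nat.choose_succ_right_eq (r + 1 + b) r
  rw [hsub] at hchoose
  calc (r + 1 + b).choose (r + 1) * (r + 1) ^ (r + 1) * b ^ b
      = (r + 1 + b).choose (r + 1) * (r + 1) * ((r + 1) ^ r * b ^ b) := by ring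
    _ ≤ (r + 1 + b).choose r * (b + 1) * (r ^ r * (b + 1) ^ b) := by
      rw [hchoose]
      exact Nat.mul_le_mul_left _ (succ_pow_self_mul_pow_self_le hr (by omega))
    _ = (r + 1 + b).choose r * r ^ r * (b + 1) ^ (b + 1) := by ring

theorem mul_div_pow_mul_div_pow {R : Type*} [Field R] (c x y z : R) {i j n : ℕ}
    (hij : i + j = n) : c * (x / z) ^ i * (y / z) ^ j = c * x ^ i * y ^ j / z ^ n := by
  rw [← hij, div_pow, div_pow, pow_add]
  ring

/-- With `f(m,s) = C(m,s)·(s/m)^s·((m−s)/m)^{m−s}`, for all `1 ≤ r` with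
`2r + 1 ≤ m` one has `f(m, r+1) ≤ f(m, r)`. -/
theorem stmt9 (m r : ℕ) (hr : 1 ≤ r) (hm : 2 * r + 1 ≤ m) :
    (m.choose (r + 1) : ℝ) * (((r + 1 : ℕ) : ℝ) / m) ^ (r + 1) *
        (((m - (r + 1) : ℕ) : ℝ) / m) ^ (m - (r + 1))
      ≤ (m.choose r : ℝ) * ((r : ℝ) / m) ^ r * (((m - r : ℕ) : ℝ) / m) ^ (m - r) := by
  rw [mul_div_pow_mul_div_pow _ _ _ _ (show r + 1 + (m - (r + 1)) = m by omega),
    mul_div_pow_mul_div_pow _ _ _ _ (show r + (m - r) = m by omega)]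
  refine div_le_div_of_nonneg_right ?_ (by positivity)
  exact_mod_cast choose_succ_mul_pow_le hr hm
end

section
/- If r < m, then Σ_{{u,v} : u ≠ v, {u,v} ∉ E(H)} d̂(u)·d̂(v) ≥ m − r, where the sum ranges over unordered pairs of distinct vertices not adjacent in H. (In other words, at any step of the sequential algorithm at which r < m edges have been placed, the number of suitable mini-vertex pairs is at least m − r.) -/
/-!
Every edge `uv` of `G` not yet placed in `H` leaves both endpoints with positive residual degree,
so it contributes `d̂(u) d̂(v) ≥ 1` to the sum, and it is a non-edge of `H`. The `m − r` unplaced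
edges thus already account for at least `m − r`.
-/

namespace SimpleGraph

variable {V : Type*} {G H : SimpleGraph V}

lemma degree_lt_of_le_of_adj_of_not_adj {u v : V} [Fintype (G.neighborSet u)]
    [Fintype (H.neighborSet u)] (hle : H ≤ G) (hG : G.Adj u v) (hH : ¬H.Adj u v) :
    H.degree u < G.degree u := by
  simp_rw [← card_neighborSet_eq_degree]
  exact Set.card_lt_card ⟨fun _ hw => hle hw, fun hsub => hH (hsub hG)⟩

variable [Fintype V] [DecidableRel G.Adj] [DecidableRel H.Adj]

lemma one_le_residualDegree_mul {u v : V} (hle : H ≤ G) (hG : G.Adj u v) (hH : ¬H.Adj u v) :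
    1 ≤ (G.degree u - H.degree u) * (G.degree v - H.degree v) := by
  have hu := degree_lt_of_le_of_adj_of_not_adj hle hG hH
  have hv := degree_lt_of_le_of_adj_of_not_adj hle hG.symm (mt H.adj_symm hH)
  exact Nat.one_le_iff_ne_zero.mpr (Nat.mul_ne_zero (by omega) (by omega))

end SimpleGraph

open SimpleGraph in
/-- Let `H` be a spanning subgraph of `G` with `r` of the `m` edges of `G`
placed, and residual degrees `d̂(v) = deg_G v − deg_H v`.  If `r < m`, then the
number of suitable mini-vertex pairs, i.e. the sum of `d̂(u)·d̂(v)` over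
unordered pairs of distinct vertices not adjacent in `H` (the edges of `Hᶜ`),
is at least `m − r`. -/
theorem stmt11 {V : Type*} [Fintype V] [DecidableEq V]
    (G H : SimpleGraph V) [DecidableRel G.Adj] [DecidableRel H.Adj]
    (hle : H ≤ G)
    (m r : ℕ) (hm : G.edgeFinset.card = m) (hr : H.edgeFinset.card = r) :
    m - r ≤ ∑ e ∈ Hᶜ.edgeFinset,
        Sym2.lift ⟨fun u v => (G.degree u - H.degree u) * (G.degree v - H.degree v),
          by intros; ring⟩ e := by
  have hcard : (G \ H).edgeFinset.card = m - r := by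
    rw [edgeFinset_sdiff, Finset.card_sdiff_of_subset (edgeFinset_mono hle), hm, hr]
  calc m - r = ∑ _e ∈ (G \ H).edgeFinset, 1 := by simpa using hcard.symm
    _ ≤ ∑ e ∈ (G \ H).edgeFinset, Sym2.lift ⟨fun u v =>
          (G.degree u - H.degree u) * (G.degree v - H.degree v), by intros; ring⟩ e := by
      refine Finset.sum_le_sum fun e he => ?_
      induction e with
      | h u v =>
        obtain ⟨hG, hH⟩ := (mem_edgeFinset.mp he : (G \ H).Adj u v)
        exact one_le_residualDegree_mul hle hG hH
    _ ≤ _ := Finset.sum_le_sum_of_subset <|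
      edgeFinset_mono (by rw [sdiff_eq]; exact inf_le_right)
end

section
/- If r < m and d_max² ≤ 4m, then Σ_{{u,v} : u ≠ v, {u,v} ∉ E(H)} d̂(u)·d̂(v)·(1 − deg_G(u)·deg_G(v)/(4m)) ≥ (m − r)·(1 − d_max²/(4m)), where the sum ranges over unordered pairs of distinct vertices not adjacent in H. -/
/-!
Every edge `uv` of `G` not yet in `H` is a pair of distinct vertices non-adjacent in `H` with
`d̂(u), d̂(v) ≥ 1`, and `d_max² ≤ 4m` makes every weight `1 − deg u · deg v / (4m)` at least
`1 − d_max² / (4m) ≥ 0`. So these `m − r` pairs each contribute at least `1 − d_max² / (4m)`,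
and all other terms of the sum are nonnegative.
-/

open Finset SimpleGraph

namespace SimpleGraph

variable {V : Type*} [Fintype V] {G H : SimpleGraph V} [DecidableRel G.Adj] [DecidableRel H.Adj]

theorem degree_lt_degree_of_adj_of_not_adj (hle : H ≤ G) {u v : V} (hG : G.Adj u v)
    (hH : ¬H.Adj u v) : H.degree u < G.degree u := by
  simp_rw [← card_neighborFinset_eq_degree]
  refine card_lt_card ((ssubset_iff_of_subset fun w hw => ?_).2 ⟨v, ?_, ?_⟩)
  · simpa using hle (by simpa using hw)
  · simpa using hG
  · simpa using hH

theorem card_edgeFinset_sdiff [DecidableEq V] (hle : H ≤ G) :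
    #(G \ H).edgeFinset = #G.edgeFinset - #H.edgeFinset := by
  rw [edgeFinset_sdiff, card_sdiff_of_subset (edgeFinset_mono hle)]

end SimpleGraph

theorem Finset.card_nsmul_le_sum_of_subset {ι M : Type*} [AddCommMonoid M] [PartialOrder M]
    [IsOrderedAddMonoid M] {s t : Finset ι} {f : ι → M} {c : M} (hst : s ⊆ t)
    (hs : ∀ i ∈ s, c ≤ f i) (ht : ∀ i ∈ t, i ∉ s → 0 ≤ f i) : #s • c ≤ ∑ i ∈ t, f i :=
  (card_nsmul_le_sum s f c hs).trans (sum_le_sum_of_subset_of_nonneg hst ht)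

theorem le_mul_mul_of_le_of_one_le {R : Type*} [Semiring R] [PartialOrder R] [IsOrderedRing R]
    {c w a b : R} (hc : c ≤ w) (hw : 0 ≤ w) (ha : 1 ≤ a) (hb : 1 ≤ b) : c ≤ a * b * w :=
  hc.trans (le_mul_of_one_le_left hw (one_le_mul_of_one_le_of_one_le ha hb))

theorem one_sub_sq_div_le_one_sub_mul_div {a b D : ℕ} {M : ℝ} (hM : 0 ≤ M) (ha : a ≤ D)
    (hb : b ≤ D) : 1 - (D : ℝ) ^ 2 / M ≤ 1 - (a : ℝ) * b / M := by
  gcongr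
  exact_mod_cast sq D ▸ Nat.mul_le_mul ha hb

/-- Let `H` be a spanning subgraph of `G` with `r` of the `m` edges of `G`
placed, and residual degrees `d̂(v) = deg_G v − deg_H v`.  If `r < m` and
`dmax² ≤ 4m`, then the weighted number of suitable mini-vertex pairs,
`∑_{{u,v}∉E(H), u≠v} d̂(u)·d̂(v)·(1 − deg_G(u)·deg_G(v)/(4m))`,
is at least `(m − r)·(1 − dmax²/(4m))`. -/
theorem stmt12 {V : Type*} [Fintype V] [DecidableEq V]
    (G H : SimpleGraph V) [DecidableRel G.Adj] [DecidableRel H.Adj]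
    (hle : H ≤ G) (dmax : ℕ) (hdeg : ∀ v, G.degree v ≤ dmax)
    (m r : ℕ) (hm : G.edgeFinset.card = m) (hr : H.edgeFinset.card = r)
    (hd4m : dmax ^ 2 ≤ 4 * m) :
    ((m : ℝ) - r) * (1 - (dmax : ℝ) ^ 2 / (4 * m)) ≤
      ∑ e ∈ Hᶜ.edgeFinset,
        Sym2.lift ⟨fun u v =>
          ((G.degree u - H.degree u : ℕ) : ℝ) * ((G.degree v - H.degree v : ℕ) : ℝ) *
            (1 - (G.degree u : ℝ) * (G.degree v : ℝ) / (4 * m)),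
          by intros; ring⟩ e := by
  have h4m : (0 : ℝ) ≤ 4 * m := by positivity
  have hc : 0 ≤ 1 - (dmax : ℝ) ^ 2 / (4 * m) :=
    sub_nonneg.2 (div_le_one_of_le₀ (by exact_mod_cast hd4m) h4m)
  have hweight (u v : V) := one_sub_sq_div_le_one_sub_mul_div h4m (hdeg u) (hdeg v)
  have hresid {u v : V} (hG : G.Adj u v) (hH : ¬H.Adj u v) :
      (1 : ℝ) ≤ ((G.degree u - H.degree u : ℕ) : ℝ) := by
    have := degree_lt_degree_of_adj_of_not_adj hle hG hH
    exact_mod_cast Nat.le_sub_of_add_le' this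
  have hcard : (m : ℝ) - r = #(G \ H).edgeFinset := by
    rw [card_edgeFinset_sdiff hle, hm, hr,
      Nat.cast_sub (hm ▸ hr ▸ card_le_card (edgeFinset_mono hle))]
  rw [hcard, ← nsmul_eq_mul]
  refine card_nsmul_le_sum_of_subset
    (edgeFinset_mono disjoint_sdiff_self_left.le_compl_right) ?_ ?_
  all_goals intro e; induction e using Sym2.ind with | _ u v => ?_
  · intro huv
    simp only [mem_edgeFinset, edgeSet_sdiff, Set.mem_sdiff,
      mem_edgeSet] at huv
    exact le_mul_mul_of_le_of_one_le (hweight u v) (hc.trans (hweight u v))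
      (hresid huv.1 huv.2) (hresid huv.1.symm (mt H.adj_symm huv.2))
  · exact fun _ _ => mul_nonneg (by positivity) (hc.trans (hweight u v))
end

section
/- If (1/2)·Σ_{u∈V} d̂(u)·( Σ_{v∈N_H(u)} d̂(v) + d̂(u) − 1 ) > (1 − τ)·C(S,2), then there exists a vertex u with d̂(u) > 0 such that Σ_{v ∉ N_H(u)∪{u}} d̂(v) ≤ τ·(S − 1). -/
/-!
The bracket equals `S - 1 - f u`, where `f u` is the weight outside the closed neighbourhood
of `u`, and `2 · C(S,2) = ∑_u d̂(u) (S - 1)`. So the hypothesis says that the `d̂`-weighted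
average of `S - 1 - f` exceeds `(1 - τ)(S - 1)`, and some vertex of positive weight must
beat the average.
-/

open Finset

theorem Finset.exists_pos_lt_of_sum_mul_lt {ι R : Type*} [Semiring R] [LinearOrder R]
    [IsStrictOrderedRing R] {s : Finset ι} {w g : ι → R} {c : R} (hw : ∀ i ∈ s, 0 ≤ w i)
    (h : ∑ i ∈ s, w i * c < ∑ i ∈ s, w i * g i) : ∃ i ∈ s, 0 < w i ∧ c < g i := by
  obtain ⟨i, hi, hlt⟩ := exists_lt_of_sum_lt h
  have hwi : w i ≠ 0 := by
    rintro h0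
    simp [h0] at hlt
  exact ⟨i, hi, (hw i hi).lt_of_ne' hwi, lt_of_mul_lt_mul_left hlt (hw i hi)⟩

theorem SimpleGraph.sum_neighborFinset_add_self_add_sum_compl {V M : Type*} [Fintype V]
    [DecidableEq V] [AddCommMonoid M] (G : SimpleGraph V) [DecidableRel G.Adj] (f : V → M)
    (u : V) :
    ∑ v ∈ G.neighborFinset u, f v + f u + ∑ v ∈ (insert u (G.neighborFinset u))ᶜ, f v =
      ∑ v, f v := by
  rw [← sum_add_sum_compl (insert u (G.neighborFinset u)),
    sum_insert (G.notMem_neighborFinset_self u), add_comm (f u)]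

theorem stmt13_general {V : Type*} [Fintype V] [DecidableEq V]
    (H : SimpleGraph V) [DecidableRel H.Adj]
    (dhat : V → ℕ) (τ : ℝ)
    (hmain : (1 - τ) * (((∑ v, dhat v).choose 2 : ℕ) : ℝ) <
      (1 / 2) * ∑ u, (dhat u : ℝ) *
        ((∑ v ∈ H.neighborFinset u, (dhat v : ℝ)) + (dhat u : ℝ) - 1)) :
    ∃ u, 0 < dhat u ∧
      ∑ v ∈ (insert u (H.neighborFinset u))ᶜ, (dhat v : ℝ) ≤
        τ * ((∑ v, dhat v : ℕ) - 1 : ℝ) := by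
  set S : ℝ := ((∑ v, dhat v : ℕ) : ℝ) with hS
  have hpartition (u : V) : ∑ v ∈ H.neighborFinset u, (dhat v : ℝ) + dhat u - 1 =
      S - 1 - ∑ v ∈ (insert u (H.neighborFinset u))ᶜ, (dhat v : ℝ) := by
    have := H.sum_neighborFinset_add_self_add_sum_compl (fun v => (dhat v : ℝ)) u
    push_cast [hS]
    linarith
  have hbudget : ∑ u, (dhat u : ℝ) * ((1 - τ) * (S - 1)) =
      2 * ((1 - τ) * (((∑ v, dhat v).choose 2 : ℕ) : ℝ)) := by
    rw [← sum_mul, Nat.cast_choose_two, ← Nat.cast_sum]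
    ring
  simp_rw [hpartition] at hmain
  obtain ⟨u, -, hu, hlt⟩ := exists_pos_lt_of_sum_mul_lt (s := univ) (c := (1 - τ) * (S - 1))
    (g := fun u => S - 1 - ∑ v ∈ (insert u (H.neighborFinset u))ᶜ, (dhat v : ℝ))
    (fun u _ => Nat.cast_nonneg (dhat u)) (by linarith)
  exact ⟨u, Nat.cast_pos.mp hu, by linarith⟩

/-- Averaging argument from the failure-probability analysis: if
`(1/2)·∑_u d̂(u)·( ∑_{v∈N_H(u)} d̂(v) + d̂(u) − 1 ) > (1 − τ)·C(S,2)`,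
where `S = ∑_v d̂(v) ≥ 2`, then some vertex `u` with `d̂(u) > 0` satisfies
`∑_{v ∉ N_H(u)∪{u}} d̂(v) ≤ τ·(S − 1)`. -/
theorem stmt13 {V : Type*} [Fintype V] [DecidableEq V]
    (H : SimpleGraph V) [DecidableRel H.Adj]
    (dhat : V → ℕ) (hS : 2 ≤ ∑ v, dhat v) (τ : ℝ) (hτ : 0 < τ)
    (hmain : (1 - τ) * (((∑ v, dhat v).choose 2 : ℕ) : ℝ) <
      (1 / 2) * ∑ u, (dhat u : ℝ) *
        ((∑ v ∈ H.neighborFinset u, (dhat v : ℝ)) + (dhat u : ℝ) - 1)) :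
    ∃ u, 0 < dhat u ∧
      ∑ v ∈ (insert u (H.neighborFinset u))ᶜ, (dhat v : ℝ) ≤
        τ * ((∑ v, dhat v : ℕ) - 1 : ℝ) :=
  stmt13_general H dhat τ hmain
end

section
/- The number of simple graphs on V with degree function c whose edge set contains every pair of distinct elements of K (i.e. which contain the complete graph on K as a subgraph) is at most the number of simple graphs on V with degree function c'. -/
/-!
Deleting the edges of the complete graph on `K` lowers the degree of each vertex of `K` by exactly
`k - 1` and leaves the other degrees alone, and it is injective on graphs containing that complete
graph, since such a graph is recovered by adding the edges back.
-/

namespace SimpleGraph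

variable {V : Type*}

theorem isClique_iff_fromEdgeSet_sym2_le {G : SimpleGraph V} {s : Set V} :
    G.IsClique s ↔ fromEdgeSet s.sym2 ≤ G := by
  refine ⟨fun h u v huv ↦ ?_, fun h u hu v hv huv ↦ h ?_⟩
  · rw [fromEdgeSet_adj, Set.mk_mem_sym2_iff] at huv
    exact h huv.1.1 huv.1.2 huv.2
  · exact (fromEdgeSet_adj _).2 ⟨Set.mk_mem_sym2_iff.2 ⟨hu, hv⟩, huv⟩

theorem neighborSet_fromEdgeSet_sym2_of_mem {s : Set V} {v : V} (hv : v ∈ s) :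
    (fromEdgeSet s.sym2).neighborSet v = s \ {v} := by
  ext u
  simp [hv, eq_comm]

theorem neighborSet_fromEdgeSet_sym2_of_notMem {s : Set V} {v : V} (hv : v ∉ s) :
    (fromEdgeSet s.sym2).neighborSet v = ∅ := by
  ext u
  simp [hv]

theorem ncard_neighborSet_sdiff_of_le {G H : SimpleGraph V} (hHG : H ≤ G) (v : V)
    (hfin : (H.neighborSet v).Finite) :
    ((G \ H).neighborSet v).ncard = (G.neighborSet v).ncard - (H.neighborSet v).ncard :=
  Set.ncard_sdiff (neighborSet_mono hHG v) hfin

theorem ncard_neighborSet_sdiff_fromEdgeSet_sym2 [DecidableEq V] {G : SimpleGraph V}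
    {K : Finset V} (hK : G.IsClique (K : Set V)) (v : V) :
    ((G \ fromEdgeSet (K : Set V).sym2).neighborSet v).ncard =
      if v ∈ K then (G.neighborSet v).ncard - (K.card - 1) else (G.neighborSet v).ncard := by
  have hfin : ((fromEdgeSet (K : Set V).sym2).neighborSet v).Finite :=
    K.finite_toSet.subset fun _ hu ↦ (Set.mk_mem_sym2_iff.1 ((fromEdgeSet_adj _).1 hu).1).2
  rw [ncard_neighborSet_sdiff_of_le (isClique_iff_fromEdgeSet_sym2_le.1 hK) v hfin]
  split_ifs with hv
  · rw [neighborSet_fromEdgeSet_sym2_of_mem (Finset.mem_coe.2 hv), ← Finset.coe_erase,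
      Set.ncard_coe_finset, Finset.card_erase_of_mem hv]
  · rw [neighborSet_fromEdgeSet_sym2_of_notMem (by simpa using hv), Set.ncard_empty, Nat.sub_zero]

end SimpleGraph

open SimpleGraph in
theorem stmt16_general {V : Type*} [Fintype V] [DecidableEq V]
    (K : Finset V) (k : ℕ) (hk : K.card = k)
    (c : V → ℕ) :
    Nat.card {G : SimpleGraph V //
        (∀ v, (G.neighborSet v).ncard = c v) ∧
        ∀ u ∈ K, ∀ v ∈ K, u ≠ v → G.Adj u v} ≤
      Nat.card {G : SimpleGraph V //
        ∀ v, (G.neighborSet v).ncard = if v ∈ K then c v - (k - 1) else c v} := by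
  subst hk
  let H : SimpleGraph V := fromEdgeSet (K : Set V).sym2
  refine Nat.card_le_card_of_injective
    (fun G ↦ ⟨G.1 \ H, fun v ↦ by
      rw [ncard_neighborSet_sdiff_fromEdgeSet_sym2 G.2.2, G.2.1]⟩) ?_
  intro G₁ G₂ h
  have hsdiff : G₁.1 \ H = G₂.1 \ H := congrArg Subtype.val h
  have hH₁ : H ≤ G₁ := isClique_iff_fromEdgeSet_sym2_le.1 G₁.2.2
  have hH₂ : H ≤ G₂ := isClique_iff_fromEdgeSet_sym2_le.1 G₂.2.2
  exact Subtype.ext <| by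
    rw [← sdiff_sup_cancel hH₁, hsdiff, sdiff_sup_cancel hH₂]

/-- Let `K ⊆ V` with `|K| = k ≥ 1` and `c : V → ℕ` with `c v ≥ k − 1` on `K`.
The number of simple graphs on `V` with degree function `c` that contain the
complete graph on `K` is at most the number of simple graphs on `V` with
degree function `c'`, where `c'` subtracts `k − 1` from `c` on `K`. -/
theorem stmt16 {V : Type*} [Fintype V] [DecidableEq V]
    (K : Finset V) (k : ℕ) (hk : K.card = k) (hk1 : 1 ≤ k)
    (c : V → ℕ) (hc : ∀ v ∈ K, k - 1 ≤ c v) :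
    Nat.card {G : SimpleGraph V //
        (∀ v, (G.neighborSet v).ncard = c v) ∧
        ∀ u ∈ K, ∀ v ∈ K, u ≠ v → G.Adj u v} ≤
      Nat.card {G : SimpleGraph V //
        ∀ v, (G.neighborSet v).ncard = if v ∈ K then c v - (k - 1) else c v} :=
  stmt16_general K k hk c
end

section
/- Let n' = |{v : d̂(v) > 0}| be the number of vertices with positive residual degree. Then Σ_v C(d̂(v),2) + Σ_{{u,v}∈E(H)} d̂(u)·d̂(v) ≤ (1/2)·Σ_v d̂(v)²·( min(n', deg_G(v)+1) − d̂(v) ) − (m − r), where the left-hand side counts the unsuitable mini-vertex pairs (self-loop pairs plus double-edge pairs) at step r. -/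
/-!
Write `d̂ = deg_G − deg_H`. Since `∑ d̂ = 2(m − r)`, the self-loop term is `½∑ d̂² − (m − r)`.
Each pair term satisfies `d̂(u) d̂(v) ≤ ½(d̂(u)² + d̂(v)²)`, and after symmetrising only the
`H`-neighbours `u` of `v` with `d̂(u) > 0` contribute to the coefficient of `d̂(v)²`. For a
vertex `v` with `d̂(v) > 0`, these neighbours, the `d̂(v)` residual `G`-neighbours of `v` and `v`
itself are distinct vertices of positive residual degree, and there are at most `deg_G(v) + 1` of
them; so that coefficient is at most `min(n', deg_G(v) + 1) − d̂(v) − 1`.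
-/

open Finset

namespace SimpleGraph

variable {V : Type*} [Fintype V]

section Neighbours

variable (H : SimpleGraph V) [DecidableRel H.Adj] {M : Type*} [AddCommMonoid M]

lemma sum_darts_eq_sum_sum_neighborFinset [DecidableEq V] (f : V → V → M) :
    ∑ d : H.Dart, f d.fst d.snd = ∑ v, ∑ u ∈ H.neighborFinset v, f v u := by
  rw [← sum_fiberwise univ fun d : H.Dart => d.fst]
  refine sum_congr rfl fun v _ => ?_
  rw [dart_fst_fiber, sum_image fun _ _ _ _ h => H.dartOfNeighborSet_injective v h,
    neighborFinset_def, ← sum_set_coe]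
  rfl

lemma sum_darts_eq_two_nsmul_sum_edgeFinset [DecidableEq V] (f : V → V → M)
    (hf : ∀ u v, f u v = f v u) :
    ∑ d : H.Dart, f d.fst d.snd = 2 • ∑ e ∈ H.edgeFinset, Sym2.lift ⟨f, hf⟩ e := by
  rw [← sum_fiberwise_of_maps_to (g := Dart.edge) (t := H.edgeFinset)
    fun d _ => mem_edgeFinset.2 d.edge_mem, smul_sum]
  refine sum_congr rfl fun e he => ?_
  induction e using Sym2.ind with | h v w => ?_
  let d : H.Dart := ⟨(v, w), mem_edgeFinset.1 he⟩
  rw [show s(v, w) = d.edge from rfl, d.edge_fiber, sum_pair d.symm_ne.symm]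
  change f v w + f w v = 2 • f v w
  rw [hf w v, two_nsmul]

lemma sum_sum_neighborFinset_eq_two_nsmul_sum_edgeFinset [DecidableEq V] (f : V → V → M)
    (hf : ∀ u v, f u v = f v u) :
    ∑ v, ∑ u ∈ H.neighborFinset v, f v u = 2 • ∑ e ∈ H.edgeFinset, Sym2.lift ⟨f, hf⟩ e :=
  (H.sum_darts_eq_sum_sum_neighborFinset f).symm.trans
    (H.sum_darts_eq_two_nsmul_sum_edgeFinset f hf)

lemma sum_sum_neighborFinset_comm (f : V → V → M) :
    ∑ v, ∑ u ∈ H.neighborFinset v, f u v = ∑ v, ∑ u ∈ H.neighborFinset v, f v u :=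
  sum_comm' fun v u => by simp [H.adj_comm]

lemma sum_sum_neighborFinset_mul_le (x : V → ℝ) (p : V → Prop) [DecidablePred p]
    (hp : ∀ v, ¬p v → x v = 0) :
    ∑ v, ∑ u ∈ H.neighborFinset v, x v * x u ≤
      ∑ v, #{u ∈ H.neighborFinset v | p u} * x v ^ 2 := by
  set g : V → V → ℝ := fun v u => if p u then x v ^ 2 else 0
  -- AM–GM when `p u` and `p v` hold; otherwise the product on the left vanishes.
  have hpair : ∀ v u, x v * x u ≤ (g v u + g u v) / 2 := by
    intro v u
    by_cases hu : p u
    · by_cases hv : p v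
      · simp only [g, hu, hv, if_true]
        nlinarith [sq_nonneg (x v - x u)]
      · simp [g, hu, hv, hp v hv]
    · simp [g, hu, hp u hu]
  calc ∑ v, ∑ u ∈ H.neighborFinset v, x v * x u
      ≤ ∑ v, ∑ u ∈ H.neighborFinset v, (g v u + g u v) / 2 := by
        gcongr with v _ u _
        exact hpair v u
    _ = ∑ v, ∑ u ∈ H.neighborFinset v, g v u := by
        simp only [add_div, sum_add_distrib, ← sum_div]
        rw [H.sum_sum_neighborFinset_comm g, add_halves]
    _ = ∑ v, #{u ∈ H.neighborFinset v | p u} * x v ^ 2 := by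
        simp [g, sum_ite, sum_const, nsmul_eq_mul]

end Neighbours

section Residual

variable {G H : SimpleGraph V} [DecidableRel G.Adj] [DecidableRel H.Adj]

lemma sum_cast_degree_sub_degree (hle : H ≤ G) :
    ∑ v, ((G.degree v - H.degree v : ℕ) : ℝ) = 2 * ((#G.edgeFinset : ℝ) - #H.edgeFinset) := by
  simp only [Nat.cast_sub (degree_le_of_le hle), sum_sub_distrib, ← Nat.cast_sum,
    sum_degrees_eq_twice_card_edges]
  push_cast
  ring

lemma sum_cast_choose_two_degree_sub_degree (hle : H ≤ G) :
    ∑ v, (((G.degree v - H.degree v).choose 2 : ℕ) : ℝ) =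
      (1 / 2) * ∑ v, ((G.degree v - H.degree v : ℕ) : ℝ) ^ 2 -
        ((#G.edgeFinset : ℝ) - #H.edgeFinset) := by
  simp only [Nat.cast_choose_two, mul_sub, mul_one, ← sq]
  rw [← sum_div, sum_sub_distrib, sum_cast_degree_sub_degree hle]
  ring

variable [DecidableEq V]

lemma degree_sub_degree_eq_card_sdiff (hle : H ≤ G) (v : V) :
    G.degree v - H.degree v = #(G.neighborFinset v \ H.neighborFinset v) := by
  rw [card_sdiff_of_subset fun u hu => by simpa using hle (by simpa using hu),
    card_neighborFinset_eq_degree, card_neighborFinset_eq_degree]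

lemma degree_sub_degree_pos_of_adj (hle : H ≤ G) {u v : V} (hG : G.Adj u v) (hH : ¬H.Adj u v) :
    0 < G.degree u - H.degree u := by
  rw [degree_sub_degree_eq_card_sdiff hle]
  exact card_pos.2 ⟨v, by simp [hG, hH]⟩

lemma card_filter_neighborFinset_add_degree_sub_degree_lt (hle : H ≤ G) {v : V}
    (hv : 0 < G.degree v - H.degree v) :
    #{u ∈ H.neighborFinset v | 0 < G.degree u - H.degree u} + (G.degree v - H.degree v) <
      #{u | 0 < G.degree u - H.degree u} := by
  set S : Finset V := {u | 0 < G.degree u - H.degree u}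
  set T := {u ∈ H.neighborFinset v | 0 < G.degree u - H.degree u}
  set R := G.neighborFinset v \ H.neighborFinset v
  have hdisj : Disjoint T R :=
    Finset.disjoint_left.2 fun u hu hu' => (mem_sdiff.1 hu').2 (mem_filter.1 hu).1
  have hsub : T ∪ R ⊆ S := by
    intro u hu
    rcases mem_union.1 hu with hu | hu
    · simpa [S] using (mem_filter.1 hu).2
    · obtain ⟨hG, hH⟩ : G.Adj v u ∧ ¬H.Adj v u := by simpa [R] using hu
      simpa [S] using degree_sub_degree_pos_of_adj hle hG.symm fun h => hH h.symm
  have hssub : T ∪ R ⊂ S :=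
    (ssubset_iff_of_subset hsub).2 ⟨v, by simpa [S] using hv, by simp [T, R]⟩
  rw [degree_sub_degree_eq_card_sdiff hle, ← card_union_of_disjoint hdisj]
  exact card_lt_card hssub

lemma card_filter_neighborFinset_add_degree_sub_degree_lt_min (hle : H ≤ G) {v : V}
    (hv : 0 < G.degree v - H.degree v) :
    #{u ∈ H.neighborFinset v | 0 < G.degree u - H.degree u} + (G.degree v - H.degree v) <
      min #{u | 0 < G.degree u - H.degree u} (G.degree v + 1) := by
  refine lt_min (card_filter_neighborFinset_add_degree_sub_degree_lt hle hv) ?_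
  have hT := card_filter_le (H.neighborFinset v) fun u => 0 < G.degree u - H.degree u
  have hHG : H.degree v ≤ G.degree v := degree_le_of_le hle
  rw [card_neighborFinset_eq_degree] at hT
  omega

lemma two_mul_sum_edgeFinset_le (hle : H ≤ G) :
    2 * ∑ e ∈ H.edgeFinset,
        Sym2.lift ⟨fun u v =>
          ((G.degree u - H.degree u : ℕ) : ℝ) * ((G.degree v - H.degree v : ℕ) : ℝ),
          by intros; ring⟩ e ≤
      ∑ v, (((min #{u | 0 < G.degree u - H.degree u} (G.degree v + 1) : ℕ) : ℝ) -
        ((G.degree v - H.degree v : ℕ) : ℝ) - 1) * ((G.degree v - H.degree v : ℕ) : ℝ) ^ 2 := by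
  set x : V → ℝ := fun v => ((G.degree v - H.degree v : ℕ) : ℝ)
  have hedges := H.sum_sum_neighborFinset_eq_two_nsmul_sum_edgeFinset (fun u v => x u * x v)
    fun _ _ => mul_comm _ _
  rw [two_nsmul, ← two_mul] at hedges
  rw [← hedges]
  refine (H.sum_sum_neighborFinset_mul_le x (fun u => 0 < G.degree u - H.degree u)
    fun v hv => by simp [x, Nat.eq_zero_of_not_pos hv]).trans (sum_le_sum fun v _ => ?_)
  by_cases hv : 0 < G.degree v - H.degree v
  · have hlt := card_filter_neighborFinset_add_degree_sub_degree_lt_min hle hv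
    have hcard : (#{u ∈ H.neighborFinset v | 0 < G.degree u - H.degree u} : ℝ) ≤
        ((min #{u | 0 < G.degree u - H.degree u} (G.degree v + 1) : ℕ) : ℝ) - x v - 1 := by
      have h : ((#{u ∈ H.neighborFinset v | 0 < G.degree u - H.degree u} +
          (G.degree v - H.degree v) + 1 : ℕ) : ℝ) ≤
          ((min #{u | 0 < G.degree u - H.degree u} (G.degree v + 1) : ℕ) : ℝ) :=
        Nat.cast_le.2 hlt
      simp only [x]
      push_cast at h ⊢
      linarith
    exact mul_le_mul_of_nonneg_right hcard (sq_nonneg _)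
  · simp [x, Nat.eq_zero_of_not_pos hv]

end Residual

end SimpleGraph

/-- Let `H` be a spanning subgraph of `G` with `r` of the `m` edges of `G`
placed, residual degrees `d̂(v) = deg_G v − deg_H v`, and let `n'` be the
number of vertices with positive residual degree.  Then the number of
unsuitable mini-vertex pairs (self-loop pairs plus double-edge pairs)
satisfies
`∑_v C(d̂(v),2) + ∑_{{u,v}∈E(H)} d̂(u)·d̂(v)
  ≤ (1/2)·∑_v d̂(v)²·(min(n', deg_G(v)+1) − d̂(v)) − (m − r)`. -/
theorem stmt17 {V : Type*} [Fintype V] [DecidableEq V]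
    (G H : SimpleGraph V) [DecidableRel G.Adj] [DecidableRel H.Adj]
    (hle : H ≤ G)
    (m r : ℕ) (hm : G.edgeFinset.card = m) (hr : H.edgeFinset.card = r) :
    (∑ v, (((G.degree v - H.degree v).choose 2 : ℕ) : ℝ)) +
      ∑ e ∈ H.edgeFinset,
        Sym2.lift ⟨fun u v =>
          ((G.degree u - H.degree u : ℕ) : ℝ) * ((G.degree v - H.degree v : ℕ) : ℝ),
          by intros; ring⟩ e
      ≤ (1 / 2) * ∑ v, ((G.degree v - H.degree v : ℕ) : ℝ) ^ 2 *
          ((min ((Finset.univ.filter fun u => 0 < G.degree u - H.degree u).card)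
              (G.degree v + 1) : ℕ) - ((G.degree v - H.degree v : ℕ) : ℝ))
        - ((m : ℝ) - r) := by
  subst hm hr
  have hsplit : ∑ v, (((min #{u | 0 < G.degree u - H.degree u} (G.degree v + 1) : ℕ) : ℝ) -
        ((G.degree v - H.degree v : ℕ) : ℝ) - 1) * ((G.degree v - H.degree v : ℕ) : ℝ) ^ 2 =
      ∑ v, ((G.degree v - H.degree v : ℕ) : ℝ) ^ 2 *
          ((min #{u | 0 < G.degree u - H.degree u} (G.degree v + 1) : ℕ) -
            ((G.degree v - H.degree v : ℕ) : ℝ)) -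
        ∑ v, ((G.degree v - H.degree v : ℕ) : ℝ) ^ 2 := by
    rw [← Finset.sum_sub_distrib]
    exact Finset.sum_congr rfl fun v _ => by ring
  linarith [SimpleGraph.sum_cast_choose_two_degree_sub_degree hle,
    SimpleGraph.two_mul_sum_edgeFinset_le hle]
end
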